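/- arXiv:1309.4652 — 7 statements merged into one kernel-verified Lean document; each statement's English description precedes it below -/
import Mathlib

section
/- The locally T-optimal discrimination criterion T(ξ, θ2) = min over θ1 of ∫ (η1(x,θ1) - η2(x,θ2))^2 dξ(x), for two nested linear models η1(x,θ1) = Σ_{i=0}^{m1-1} θ_{1,i} f_i(x) and η2(x,θ2) = Σ_{i=0}^{m2-1} θ_{2,i} f_i(x) with m2 > m1, equals θ_{2,m}^2 · (b^T, 1) M_(s)(ξ) (b^T, 1)^T, where m = m2 - 1, s = m2 - m1, and b_i = θ_{2,m-s+i}/θ_{2,m} (i = 1,…,s-1), assuming θ_{2,m} ≠ 0 and that M11(ξ)X = M12(ξ) has a solution. -/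
/-!
Evaluate everything at the design points and use the semi-inner product `⟪r, s⟫ = Σ wₙ rₙ sₙ`.
With design matrices `A = (f_(1)(xₙ))` and `B = (f_(2)(xₙ))`, the residual of `θ₁` is
`A u - B v` with `u = θ₁ - θ₂⁽¹⁾` and `v = θ₂⁽²⁾ = θ_{2,m} (bᵀ, 1)ᵀ`. The normal equations
`M₁₁ X = M₁₂` make `(A X - B) v` orthogonal to the columns of `A`, so by Pythagoras the residual
splits as `‖A (u - X v)‖² + ‖(A X - B) v‖²`; the first term vanishes at `u = X v`, and the second
is `vᵀ (M₂₂ - Xᵀ M₁₁ X) v`.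
-/

open Matrix

namespace Matrix

variable {R n ι κ : Type*} [Fintype n]

theorem mulVec_dotProduct_mulVec_mulVec [Fintype ι] [Fintype κ] [CommRing R] (A : Matrix n ι R)
    (W : Matrix n n R) (B : Matrix n κ R) (a : ι → R) (b : κ → R) :
    (A *ᵥ a) ⬝ᵥ (W *ᵥ (B *ᵥ b)) = a ⬝ᵥ ((Aᵀ * W * B) *ᵥ b) := by
  rw [← mulVec_mulVec, ← mulVec_mulVec, dotProduct_mulVec a, vecMul_transpose]

theorem transpose_mul_diagonal_mul_apply [CommSemiring R] [DecidableEq n] (A : Matrix n ι R)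
    (w : n → R) (B : Matrix n κ R) (i : ι) (j : κ) :
    (Aᵀ * diagonal w * B) i j = ∑ k, w k * A k i * B k j := by
  rw [mul_apply]
  simp only [mul_diagonal, transpose_apply]
  exact Finset.sum_congr rfl fun k _ => by ring

theorem dotProduct_diagonal_mulVec_self [CommSemiring R] [DecidableEq n] (w r : n → R) :
    r ⬝ᵥ (diagonal w *ᵥ r) = ∑ k, w k * r k ^ 2 := by
  simp only [dotProduct, mulVec_diagonal]
  exact Finset.sum_congr rfl fun k _ => by ring

theorem quadForm_sub_eq_add_schur [Fintype ι] [Fintype κ] [CommRing R] {W : Matrix n n R}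
    (hW : W.IsSymm) {A : Matrix n ι R} {B : Matrix n κ R} {X : Matrix ι κ R}
    (hX : Aᵀ * W * A * X = Aᵀ * W * B) (u : ι → R) (v : κ → R) :
    (A *ᵥ u - B *ᵥ v) ⬝ᵥ (W *ᵥ (A *ᵥ u - B *ᵥ v)) =
      (A *ᵥ (u - X *ᵥ v)) ⬝ᵥ (W *ᵥ (A *ᵥ (u - X *ᵥ v))) +
        v ⬝ᵥ ((Bᵀ * W * B - Xᵀ * (Aᵀ * W * A) * X) *ᵥ v) := by
  have horth : Aᵀ * W * (A * X - B) = 0 := by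
    rw [Matrix.mul_sub, ← Matrix.mul_assoc, hX, sub_self]
  have horth' : (A * X - B)ᵀ * W * A = 0 := by
    rw [← transpose_transpose ((A * X - B)ᵀ * W * A)]
    simp only [transpose_mul, transpose_transpose, hW.eq, ← Matrix.mul_assoc, horth,
      transpose_zero]
  have hschur : (A * X - B)ᵀ * W * (A * X - B) = Bᵀ * W * B - Xᵀ * (Aᵀ * W * A) * X := by
    calc (A * X - B)ᵀ * W * (A * X - B)
        = (A * X - B)ᵀ * W * A * X - (A * X - B)ᵀ * W * B := by
          rw [Matrix.mul_sub, Matrix.mul_assoc _ A X]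
      _ = Bᵀ * W * B - Xᵀ * (Aᵀ * W * B) := by
          rw [horth', Matrix.zero_mul, zero_sub, transpose_sub, transpose_mul, Matrix.sub_mul,
            Matrix.sub_mul, neg_sub]
          simp only [Matrix.mul_assoc]
      _ = Bᵀ * W * B - Xᵀ * (Aᵀ * W * A) * X := by rw [← hX, Matrix.mul_assoc Xᵀ]
  have hsplit : A *ᵥ u - B *ᵥ v = A *ᵥ (u - X *ᵥ v) + (A * X - B) *ᵥ v := by
    rw [mulVec_sub, sub_mulVec, mulVec_mulVec]; abel
  rw [hsplit, mulVec_add, dotProduct_add, add_dotProduct, add_dotProduct,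
    mulVec_dotProduct_mulVec_mulVec, mulVec_dotProduct_mulVec_mulVec A W,
    mulVec_dotProduct_mulVec_mulVec _ W A, mulVec_dotProduct_mulVec_mulVec _ W (A * X - B),
    horth, horth', hschur, zero_mulVec, zero_mulVec, dotProduct_zero, dotProduct_zero, add_zero,
    zero_add]

theorem isLeast_range_quadForm_sub_eq_schur [Fintype ι] [Fintype κ] [CommRing R] [PartialOrder R]
    [IsOrderedAddMonoid R] [StarRing R] [TrivialStar R] {W : Matrix n n R} (hW : W.PosSemidef)
    {A : Matrix n ι R} {B : Matrix n κ R} {X : Matrix ι κ R}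
    (hX : Aᵀ * W * A * X = Aᵀ * W * B) (u₀ : ι → R) (v : κ → R) :
    IsLeast (Set.range fun u => (A *ᵥ u - (A *ᵥ u₀ + B *ᵥ v)) ⬝ᵥ
        (W *ᵥ (A *ᵥ u - (A *ᵥ u₀ + B *ᵥ v))))
      (v ⬝ᵥ ((Bᵀ * W * B - Xᵀ * (Aᵀ * W * A) * X) *ᵥ v)) := by
  have hW' : W.IsSymm := isHermitian_iff_isSymm.mp hW.1
  have key : ∀ u, A *ᵥ u - (A *ᵥ u₀ + B *ᵥ v) = A *ᵥ (u - u₀) - B *ᵥ v := fun u => by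
    rw [mulVec_sub]; abel
  refine ⟨⟨u₀ + X *ᵥ v, ?_⟩, ?_⟩
  · dsimp only
    rw [key, quadForm_sub_eq_add_schur hW' hX, add_sub_cancel_left, sub_self, mulVec_zero,
      mulVec_zero, zero_dotProduct, zero_add]
  · rintro _ ⟨u, rfl⟩
    dsimp only
    rw [key, quadForm_sub_eq_add_schur hW' hX]
    exact le_add_of_nonneg_left <| by
      simpa only [star_trivial] using hW.dotProduct_mulVec_nonneg (A *ᵥ (u - u₀ - X *ᵥ v))

end Matrix

theorem Fin.sum_univ_eq_sum_castLE_add {M : Type*} [AddCommMonoid M] {a b : ℕ} (h : a ≤ b)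
    (g : Fin b → M) :
    ∑ i, g i = ∑ i : Fin a, g (Fin.castLE h i) + ∑ j : Fin (b - a), g ⟨a + j, by omega⟩ := by
  rw [← Equiv.sum_comp (finCongr (Nat.add_sub_of_le h)) g, Fin.sum_univ_add]
  rfl

/-- For nested linear models `η1(x,θ1) = Σ_{i<m1} θ1_i f_i(x)` and
`η2(x,θ2) = Σ_{i<m2} θ2_i f_i(x)` (`m1 < m2`) and a finitely supported design,
the locally T-optimal criterion
`T(ξ,θ2) = min_{θ1} ∫ (η1 - η2)² dξ` equals
`θ_{2,m}² · (bᵀ,1) M_(s)(ξ) (bᵀ,1)ᵀ` with `m = m2-1`, `s = m2-m1`,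
`b_j = θ_{2,m1+j}/θ_{2,m}`, provided `θ_{2,m} ≠ 0` and `M11(ξ) X = M12(ξ)`
has a solution. -/
theorem T_criterion_eq_schur_quadform {k N m1 m2 : ℕ} (hm : m1 < m2)
    (x : Fin N → (Fin k → ℝ))
    (w : Fin N → ℝ) (hw : ∀ n, 0 ≤ w n)
    (f : Fin m2 → (Fin k → ℝ) → ℝ)
    (θ2 : Fin m2 → ℝ) (hθ : θ2 ⟨m2 - 1, by omega⟩ ≠ 0)
    (e : Fin (m2 - m1) → Fin m2)
    (he : e = fun j => ⟨m1 + j.1, by have := j.isLt; omega⟩)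
    (M11 : Matrix (Fin m1) (Fin m1) ℝ)
    (hM11 : M11 = Matrix.of fun i j =>
      ∑ n, w n * f (Fin.castLE hm.le i) (x n) * f (Fin.castLE hm.le j) (x n))
    (M12 : Matrix (Fin m1) (Fin (m2 - m1)) ℝ)
    (hM12 : M12 = Matrix.of fun i j =>
      ∑ n, w n * f (Fin.castLE hm.le i) (x n) * f (e j) (x n))
    (M22 : Matrix (Fin (m2 - m1)) (Fin (m2 - m1)) ℝ)
    (hM22 : M22 = Matrix.of fun i j => ∑ n, w n * f (e i) (x n) * f (e j) (x n))
    (X : Matrix (Fin m1) (Fin (m2 - m1)) ℝ) (hX : M11 * X = M12)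
    (c : Fin (m2 - m1) → ℝ)
    (hc : c = fun j => θ2 (e j) / θ2 ⟨m2 - 1, by omega⟩) :
    IsLeast
      {v : ℝ | ∃ θ1 : Fin m1 → ℝ,
        v = ∑ n, w n *
          ((∑ i : Fin m1, θ1 i * f (Fin.castLE hm.le i) (x n)) -
            (∑ i : Fin m2, θ2 i * f i (x n)))^2}
      ((θ2 ⟨m2 - 1, by omega⟩)^2 * (c ⬝ᵥ ((M22 - Xᵀ * M11 * X) *ᵥ c))) := by
  set t := θ2 ⟨m2 - 1, by omega⟩
  set A : Matrix (Fin N) (Fin m1) ℝ := of fun n i => f (Fin.castLE hm.le i) (x n)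
  set B : Matrix (Fin N) (Fin (m2 - m1)) ℝ := of fun n j => f (e j) (x n)
  have hM11' : M11 = Aᵀ * diagonal w * A := by
    ext i j; rw [hM11, transpose_mul_diagonal_mul_apply]; rfl
  have hM12' : M12 = Aᵀ * diagonal w * B := by
    ext i j; rw [hM12, transpose_mul_diagonal_mul_apply]; rfl
  have hM22' : M22 = Bᵀ * diagonal w * B := by
    ext i j; rw [hM22, transpose_mul_diagonal_mul_apply]; rfl
  have hθe : θ2 ∘ e = t • c := by
    funext j; simp [hc, t, mul_div_cancel₀ _ hθ]
  have hres : ∀ θ1 n, (∑ i : Fin m1, θ1 i * f (Fin.castLE hm.le i) (x n)) -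
      ∑ i : Fin m2, θ2 i * f i (x n) =
        (A *ᵥ θ1 - (A *ᵥ (θ2 ∘ Fin.castLE hm.le) + B *ᵥ (θ2 ∘ e))) n := by
    intro θ1 n
    rw [Fin.sum_univ_eq_sum_castLE_add hm.le]
    simp [A, B, he, mulVec, dotProduct, mul_comm]
  rw [hM11', hM12'] at hX
  refine (congrArg₂ IsLeast ?_ ?_).mp <| isLeast_range_quadForm_sub_eq_schur
    (PosSemidef.diagonal hw) hX (θ2 ∘ Fin.castLE hm.le) (θ2 ∘ e)
  · ext v
    simp only [Set.mem_ofPred_eq, Set.mem_range, hres, dotProduct_diagonal_mulVec_self, eq_comm]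
  · rw [hθe, hM22', hM11', mulVec_smul, dotProduct_smul, smul_dotProduct, smul_eq_mul,
      smul_eq_mul]
    ring
end

section
/- Let ξ be a probability measure such that M_(s)(ξ) is nonsingular and ψ(x) = f_(2)(x) - X^T f_(1)(x) with M11(ξ)X = M12(ξ). Then the infimum over nonzero l ∈ R^s of (l^T M_(s)(ξ) l) / sup_{x∈X} (l^T ψ(x))^2 is at least 1 / sup_{x∈X} ψ(x)^T M_(s)(ξ)^{-1} ψ(x). -/
open Matrix

lemma quad_sum {ι κ N : Type*} [Fintype ι] [Fintype κ] [Fintype N]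
    (w : N → ℝ) (p : ι → N → ℝ) (q : κ → N → ℝ) (a : ι → ℝ) (b : κ → ℝ) :
    a ⬝ᵥ ((Matrix.of fun i j => ∑ n, w n * p i n * q j n) *ᵥ b) =
    ∑ n, w n * (∑ i, a i * p i n) * (∑ j, b j * q j n) := by
  simp only [dotProduct, mulVec, Matrix.of_apply, Finset.mul_sum, Finset.sum_mul]
  refine ((Finset.sum_congr rfl fun i _ => Finset.sum_comm ..).trans
    (Finset.sum_comm ..)).trans ?_
  refine Finset.sum_congr rfl fun n _ => (Finset.sum_comm ..).trans ?_
  exact Finset.sum_congr rfl fun i _ => Finset.sum_congr rfl fun j _ => by ring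

/-- If `M_(s)(ξ)` is nonsingular and `ψ(x) = f_(2)(x) - Xᵀ f_(1)(x)`
with `M11(ξ) X = M12(ξ)`, then for every nonzero `l ∈ ℝ^s`,
`(lᵀ M_(s)(ξ) l) / sup_{x∈X} (lᵀ ψ(x))² ≥ 1 / sup_{x∈X} ψ(x)ᵀ M_(s)(ξ)⁻¹ ψ(x)`. -/
theorem cauchy_schwarz_schur_bound {k N p s : ℕ}
    (D : Set (Fin k → ℝ)) (hD : IsCompact D) (hDne : D.Nonempty)
    (x : Fin N → (Fin k → ℝ)) (hx : ∀ n, x n ∈ D)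
    (w : Fin N → ℝ) (hw : ∀ n, 0 ≤ w n) (hw1 : ∑ n, w n = 1)
    (f1 : Fin p → (Fin k → ℝ) → ℝ) (f2 : Fin s → (Fin k → ℝ) → ℝ)
    (hf1 : ∀ i, ContinuousOn (f1 i) D) (hf2 : ∀ i, ContinuousOn (f2 i) D)
    (M11 : Matrix (Fin p) (Fin p) ℝ)
    (hM11 : M11 = Matrix.of fun i j => ∑ n, w n * f1 i (x n) * f1 j (x n))
    (M12 : Matrix (Fin p) (Fin s) ℝ)
    (hM12 : M12 = Matrix.of fun i j => ∑ n, w n * f1 i (x n) * f2 j (x n))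
    (M22 : Matrix (Fin s) (Fin s) ℝ)
    (hM22 : M22 = Matrix.of fun i j => ∑ n, w n * f2 i (x n) * f2 j (x n))
    (X : Matrix (Fin p) (Fin s) ℝ) (hX : M11 * X = M12)
    (S : Matrix (Fin s) (Fin s) ℝ) (hS : S = M22 - Xᵀ * M11 * X)
    (hSinv : IsUnit S.det)
    (ψ : (Fin k → ℝ) → Fin s → ℝ)
    (hψ : ψ = fun y i => f2 i y - ∑ j, X j i * f1 j y)
    (hpos : ∀ l : Fin s → ℝ, l ≠ 0 →
      0 < sSup ((fun y => (l ⬝ᵥ ψ y)^2) '' D)) :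
    ∀ l : Fin s → ℝ, l ≠ 0 →
      1 / sSup ((fun y => ψ y ⬝ᵥ (S⁻¹ *ᵥ ψ y)) '' D) ≤
        (l ⬝ᵥ (S *ᵥ l)) / sSup ((fun y => (l ⬝ᵥ ψ y)^2) '' D) := by
  -- symmetry of M11, M22
  have hM11s : M11ᵀ = M11 := by
    rw [hM11]; ext i j
    simp only [transpose_apply, Matrix.of_apply]
    exact Finset.sum_congr rfl fun n _ => by ring
  have hM22s : M22ᵀ = M22 := by
    rw [hM22]; ext i j
    simp only [transpose_apply, Matrix.of_apply]
    exact Finset.sum_congr rfl fun n _ => by ring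
  have hSsymm : Sᵀ = S := by
    rw [hS, transpose_sub, transpose_mul, transpose_mul, transpose_transpose,
      hM11s, hM22s, Matrix.mul_assoc]
  -- the quadratic form of S is a weighted sum of squares
  have hquad : ∀ u : Fin s → ℝ,
      u ⬝ᵥ (S *ᵥ u) = ∑ n, w n * (u ⬝ᵥ ψ (x n))^2 := by
    intro u
    set g : Fin N → ℝ := fun n => ∑ i, u i * f2 i (x n) with hg
    set h : Fin N → ℝ := fun n => ∑ j, (X *ᵥ u) j * f1 j (x n) with hh
    have e22 : u ⬝ᵥ (M22 *ᵥ u) = ∑ n, w n * g n * g n := by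
      rw [hM22]; exact quad_sum w _ _ u u
    have e11 : (X *ᵥ u) ⬝ᵥ (M11 *ᵥ (X *ᵥ u)) = ∑ n, w n * h n * h n := by
      rw [hM11]; exact quad_sum w _ _ (X *ᵥ u) (X *ᵥ u)
    have e12 : (X *ᵥ u) ⬝ᵥ (M12 *ᵥ u) = ∑ n, w n * h n * g n := by
      rw [hM12]; exact quad_sum w _ _ (X *ᵥ u) u
    have hXu : M12 *ᵥ u = M11 *ᵥ (X *ᵥ u) := by
      rw [← hX, ← mulVec_mulVec]
    have hgh : ∑ n, w n * h n * g n = ∑ n, w n * h n * h n := by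
      rw [← e12, ← e11, hXu]
    have eS : u ⬝ᵥ (S *ᵥ u)
        = u ⬝ᵥ (M22 *ᵥ u) - (X *ᵥ u) ⬝ᵥ (M11 *ᵥ (X *ᵥ u)) := by
      rw [hS, sub_mulVec, dotProduct_sub, ← mulVec_mulVec, ← mulVec_mulVec,
        dotProduct_mulVec u Xᵀ, vecMul_transpose]
    have hψn : ∀ n, u ⬝ᵥ ψ (x n) = g n - h n := by
      intro n
      simp only [hψ, dotProduct, mul_sub, Finset.sum_sub_distrib, hg, hh, mulVec]
      congr 1
      simp only [Finset.mul_sum, Finset.sum_mul, dotProduct]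
      exact (Finset.sum_comm ..).trans (Finset.sum_congr rfl fun j _ =>
        Finset.sum_congr rfl fun i _ => by ring)
    rw [eS, e22, e11]
    have expand : ∀ n, w n * (u ⬝ᵥ ψ (x n))^2
        = w n * g n * g n - 2 * (w n * h n * g n) + w n * h n * h n := by
      intro n; rw [hψn]; ring
    rw [Finset.sum_congr rfl fun n _ => expand n, Finset.sum_add_distrib,
      Finset.sum_sub_distrib, ← Finset.mul_sum, hgh]
    ring
  have hpsd : ∀ u : Fin s → ℝ, 0 ≤ u ⬝ᵥ (S *ᵥ u) := by
    intro u
    rw [hquad]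
    exact Finset.sum_nonneg fun n _ => mul_nonneg (hw n) (sq_nonneg _)
  -- Cauchy–Schwarz with respect to S
  have hCS : ∀ (l : Fin s → ℝ) (v : Fin s → ℝ),
      (l ⬝ᵥ v)^2 ≤ (l ⬝ᵥ (S *ᵥ l)) * (v ⬝ᵥ (S⁻¹ *ᵥ v)) := by
    intro l v
    set u : Fin s → ℝ := S⁻¹ *ᵥ v with hu
    have hSu : S *ᵥ u = v := by
      rw [hu, mulVec_mulVec, Matrix.mul_nonsing_inv S hSinv, one_mulVec]
    have huv : v ⬝ᵥ u = u ⬝ᵥ v := dotProduct_comm _ _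
    have hquadn : ∀ t : ℝ,
        0 ≤ (u ⬝ᵥ v) * (t * t) + (2 * (l ⬝ᵥ v)) * t + (l ⬝ᵥ (S *ᵥ l)) := by
      intro t
      have h0 := hpsd (l + t • u)
      have huSl : u ⬝ᵥ (S *ᵥ l) = v ⬝ᵥ l := by
        rw [dotProduct_mulVec, ← hSsymm, vecMul_transpose, hSu]
      have expand : (l + t • u) ⬝ᵥ (S *ᵥ (l + t • u))
          = (u ⬝ᵥ v) * (t * t) + (2 * (l ⬝ᵥ v)) * t + (l ⬝ᵥ (S *ᵥ l)) := by
        rw [mulVec_add, mulVec_smul, dotProduct_add, add_dotProduct,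
          add_dotProduct, smul_dotProduct, smul_dotProduct, dotProduct_smul,
          dotProduct_smul, hSu, huSl, dotProduct_comm v l]
        simp only [smul_eq_mul]
        ring
      rw [expand] at h0
      exact h0
    have hd := discrim_le_zero hquadn
    rw [discrim] at hd
    rw [dotProduct_comm v (S⁻¹ *ᵥ v), ← hu]
    nlinarith [hd]
  intro l hl
  -- continuity and boundedness of the functions on D
  have hψc : ∀ i, ContinuousOn (fun y => ψ y i) D := by
    intro i
    rw [hψ]
    exact (hf2 i).sub (continuousOn_finset_sum _ fun j _ =>
      continuousOn_const.mul (hf1 j))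
  have hCcont : ContinuousOn (fun y => ψ y ⬝ᵥ (S⁻¹ *ᵥ ψ y)) D := by
    simp only [dotProduct, mulVec]
    exact continuousOn_finset_sum _ fun i _ =>
      (hψc i).mul (continuousOn_finset_sum _ fun j _ =>
        continuousOn_const.mul (hψc j))
  have hbddC : BddAbove ((fun y => ψ y ⬝ᵥ (S⁻¹ *ᵥ ψ y)) '' D) :=
    (hD.image_of_continuousOn hCcont).bddAbove
  set A := sSup ((fun y => (l ⬝ᵥ ψ y)^2) '' D) with hA_def
  set C := sSup ((fun y => ψ y ⬝ᵥ (S⁻¹ *ᵥ ψ y)) '' D) with hC_def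
  set B := l ⬝ᵥ (S *ᵥ l) with hB_def
  have hA : 0 < A := hpos l hl
  have hB0 : 0 ≤ B := hpsd l
  have hAle : A ≤ B * C := by
    refine csSup_le (hDne.image _) ?_
    rintro r ⟨y, hy, rfl⟩
    calc (l ⬝ᵥ ψ y)^2 ≤ B * (ψ y ⬝ᵥ (S⁻¹ *ᵥ ψ y)) := hCS l (ψ y)
      _ ≤ B * C := mul_le_mul_of_nonneg_left
          (le_csSup hbddC (Set.mem_image_of_mem _ hy)) hB0
  have hBC : 0 < B * C := hA.trans_le hAle
  have hB : 0 < B := by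
    rcases hB0.eq_or_lt with h | h
    · rw [← h, zero_mul] at hBC; exact absurd hBC (lt_irrefl 0)
    · exact h
  have hC : 0 < C := by
    by_contra hC'
    push_neg at hC'
    nlinarith
  rw [div_le_div_iff₀ hC hA, one_mul]
  exact hAle
end

section
/- For discriminating between polynomial models of degrees m-2 and m, the best sup-norm approximation distance satisfies: for the quadratic case (m = 2) on [-1,1], R̄(b) = inf over q0 ∈ R of sup over x ∈ [-1,1] of |x^2 + b x + q0|^2 equals (1/4)(1 + |b|/2)^4 if |b| ≤ 2, and equals b^2 if |b| ≥ 2. -/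
lemma cheb_aux (b M m xM xm : ℝ) (hM : xM ∈ Set.Icc (-1:ℝ) 1) (hm : xm ∈ Set.Icc (-1:ℝ) 1)
    (hgM : xM^2 + b*xM = M) (hgm : xm^2 + b*xm = m)
    (hub : ∀ x ∈ Set.Icc (-1:ℝ) 1, x^2 + b*x ≤ M)
    (hlb : ∀ x ∈ Set.Icc (-1:ℝ) 1, m ≤ x^2 + b*x) :
    IsLeast {v : ℝ | ∃ q0 : ℝ,
        v = sSup ((fun x => (x^2 + b*x + q0)^2) '' Set.Icc (-1:ℝ) 1)}
      (((M-m)/2)^2) := by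
  have h0 : (0:ℝ) ∈ Set.Icc (-1:ℝ) 1 := by norm_num
  constructor
  · refine ⟨-(M+m)/2, ?_⟩
    have hupper : ∀ y ∈ (fun x => (x^2 + b*x + -(M+m)/2)^2) '' Set.Icc (-1:ℝ) 1,
        y ≤ ((M-m)/2)^2 := by
      rintro y ⟨x, hx, rfl⟩
      have h1 := hub x hx
      have h2 := hlb x hx
      nlinarith [mul_nonneg (sub_nonneg.2 h1) (sub_nonneg.2 h2)]
    have hmem : ((M-m)/2)^2 ∈ (fun x => (x^2 + b*x + -(M+m)/2)^2) '' Set.Icc (-1:ℝ) 1 := by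
      refine ⟨xM, hM, ?_⟩
      simp only [hgM]
      ring
    symm
    apply le_antisymm
    · exact csSup_le ⟨_, ⟨0, h0, rfl⟩⟩ hupper
    · exact le_csSup ⟨((M-m)/2)^2, hupper⟩ hmem
  · rintro v ⟨q0, rfl⟩
    set S := (fun x => (x^2 + b*x + q0)^2) '' Set.Icc (-1:ℝ) 1 with hS
    have hbdd : BddAbove S := by
      refine ⟨(M-m)^2/2 + (M+m+2*q0)^2/2, ?_⟩
      rintro y ⟨x, hx, rfl⟩
      have h1 := hub x hx
      have h2 := hlb x hx
      nlinarith [mul_nonneg (sub_nonneg.2 h1) (sub_nonneg.2 h2),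
        sq_nonneg (x^2 + b*x - (M+m) - q0)]
    have h1 : (M+q0)^2 ≤ sSup S := by
      apply le_csSup hbdd
      exact ⟨xM, hM, by simp only [hgM]⟩
    have h2 : (m+q0)^2 ≤ sSup S := by
      apply le_csSup hbdd
      exact ⟨xm, hm, by simp only [hgm]⟩
    nlinarith [sq_nonneg (M+m+2*q0)]

/-- The squared minimal Chebyshev deviation of the monic quadratic
`x² + bx` from the constants on `[-1,1]`:
`R̄(b) = inf_{q0} sup_{x∈[-1,1]} |x² + bx + q0|²` equals
`(1/4)(1+|b|/2)⁴` if `|b| ≤ 2` and `b²` if `|b| ≥ 2`, and the infimum is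
attained. -/
theorem chebyshev_deviation_quadratic (b : ℝ) :
    IsLeast
      {v : ℝ | ∃ q0 : ℝ,
        v = sSup ((fun x => (x^2 + b*x + q0)^2) '' Set.Icc (-1:ℝ) 1)}
      (if |b| ≤ 2 then (1/4)*(1 + |b|/2)^4 else b^2) := by
  rcases le_or_gt 0 b with hb | hb
  · rw [abs_of_nonneg hb]
    rcases le_or_gt b 2 with h2 | h2
    · rw [if_pos h2]
      have key := cheb_aux b (1+b) (-b^2/4) 1 (-b/2)
        (by norm_num) (by constructor <;> nlinarith)
        (by ring) (by ring)
        (by rintro x ⟨hx1, hx2⟩; nlinarith)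
        (by rintro x ⟨hx1, hx2⟩; nlinarith [sq_nonneg (x + b/2)])
      rw [show (1/4)*(1 + b/2)^4 = (((1+b) - (-b^2/4))/2)^2 by ring]
      exact key
    · rw [if_neg (by linarith)]
      have key := cheb_aux b (1+b) (1-b) 1 (-1)
        (by norm_num) (by norm_num)
        (by ring) (by ring)
        (by rintro x ⟨hx1, hx2⟩; nlinarith)
        (by rintro x ⟨hx1, hx2⟩; nlinarith [mul_nonneg (by linarith : (0:ℝ) ≤ x+1) (by linarith : (0:ℝ) ≤ x-1+b)])
      rw [show (b:ℝ)^2 = (((1+b) - (1-b))/2)^2 by ring]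
      exact key
  · rw [abs_of_neg hb]
    rcases le_or_gt (-b) 2 with h2 | h2
    · rw [if_pos h2]
      have key := cheb_aux b (1-b) (-b^2/4) (-1) (-b/2)
        (by norm_num) (by constructor <;> nlinarith)
        (by ring) (by ring)
        (by rintro x ⟨hx1, hx2⟩; nlinarith)
        (by rintro x ⟨hx1, hx2⟩; nlinarith [sq_nonneg (x + b/2)])
      rw [show (1/4)*(1 + -b/2)^4 = (((1-b) - (-b^2/4))/2)^2 by ring]
      exact key
    · rw [if_neg (by linarith)]
      have key := cheb_aux b (1-b) (1+b) (-1) 1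
        (by norm_num) (by norm_num)
        (by ring) (by ring)
        (by rintro x ⟨hx1, hx2⟩; nlinarith)
        (by rintro x ⟨hx1, hx2⟩; nlinarith [mul_nonneg (by linarith : (0:ℝ) ≤ 1-x) (by linarith : (0:ℝ) ≤ -x-1-b)])
      rw [show (b:ℝ)^2 = (((1-b) - (1+b))/2)^2 by ring]
      exact key
end

section
/- Define K(h,b) = (h + b^2)(1 - h)/R̄(b) where R̄(b) = (1/4)(1 + |b|/2)^4 for |b| ≤ 2 and R̄(b) = b^2 for |b| ≥ 2. For 0 < d ≤ 1/2, the maximizer over h ∈ [0, 1/2] of inf_{b ∈ [-d,d]} K(h,b) is h* = (1 - d^2)/2, and the inner infimum at h* is attained at b = ±d. -/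
/-- `R̄(b)`: squared minimal Chebyshev deviation for the quadratic case. -/
noncomputable def Rbar (b : ℝ) : ℝ := if |b| ≤ 2 then (1/4)*(1 + |b|/2)^4 else b^2

/-- `K(h,b) = (h + b²)(1 - h)/R̄(b)`. -/
noncomputable def Kfun (h b : ℝ) : ℝ := (h + b^2) * (1 - h) / Rbar b

lemma aux_uss (u s : ℝ) (hu : 0 ≤ u) (hs : 0 ≤ s) (hus : u + s ≤ 1/2) :
    0 ≤ 125*u + (125/4)*s + (25/2)*s^2 - (5/4)*s^3 - 50*u*s - 15*u*s^2 + u*s^3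
      - 150*u^2 + 14*u^2*s^2 - u^2*s^3 + 60*u^3 + 16*u^3*s - 4*u^3*s^2
      - 8*u^4 - 4*u^4*s := by
  have hu12 : u ≤ 1/2 := by linarith
  have hs12 : s ≤ 1/2 := by linarith
  have b1 : u^2 ≤ u/2 := by nlinarith
  have b2 : u^3 ≤ u/4 := by nlinarith
  have b3 : u^4 ≤ u/8 := by nlinarith
  have c1 : u*s ≤ u/2 := by nlinarith
  have c2 : u*s^2 ≤ u/4 := by nlinarith
  have s2 : s^2 ≤ 1/4 := by nlinarith
  have s3 : s^3 ≤ 1/8 := by nlinarith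
  have c3 : u^2*s^3 ≤ u/16 := by
    nlinarith [mul_le_mul_of_nonneg_left s3 (sq_nonneg u)]
  have c4 : u^3*s^2 ≤ u/16 := by
    nlinarith [mul_le_mul_of_nonneg_left s2 (by positivity : (0:ℝ) ≤ u^3)]
  have c5 : u^4*s ≤ u/16 := by
    nlinarith [mul_le_mul_of_nonneg_left hs12 (by positivity : (0:ℝ) ≤ u^4)]
  have d1 : s^3 ≤ s/4 := by nlinarith
  have p1 : 0 ≤ u*s^3 := by positivity
  have p2 : 0 ≤ u^2*s^2 := by positivity
  have p3 : 0 ≤ u^3*s := by positivity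
  have p4 : 0 ≤ u^3 := by positivity
  have p5 : 0 ≤ s^2 := by positivity
  linarith

lemma core_ineq (d t : ℝ) (h0 : 0 ≤ t) (htd : t ≤ d) (hd : d ≤ 1/2) :
    (1 + d^2) * (2 + t)^4 ≤ (1 + 2*t^2 - d^2) * (2 + d)^4 := by
  have hd0 : 0 ≤ d := h0.trans htd
  have hQ : 0 ≤ 32 - 8*t + 8*t^2 + t^3 - 8*d - 56*d*t + d*t^2 - 24*d^2 - 23*d^2*t
      + 8*d^2*t^2 + d^2*t^3 - 23*d^3 - 8*d^3*t + d^3*t^2 - 8*d^4 - d^4*t - d^5 := by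
    have := aux_uss (1/2 - d) (d - t) (by linarith) (by linarith) (by linarith)
    nlinarith [this]
  nlinarith [mul_nonneg (sub_nonneg.2 htd) hQ]

lemma Rbar_eq_of_le (b : ℝ) (hb : |b| ≤ 2) : Rbar b = (1/4)*(1 + |b|/2)^4 := if_pos hb

lemma Kfun_mono (d b : ℝ) (hd0 : 0 < d) (hd : d ≤ 1/2) (hb : |b| ≤ d) :
    Kfun ((1 - d^2)/2) d ≤ Kfun ((1 - d^2)/2) b := by
  set t := |b| with ht
  have ht0 : 0 ≤ t := abs_nonneg b
  have htd : t ≤ d := hb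
  have hbsq : b^2 = t^2 := (sq_abs b).symm
  have hRb : Rbar b = (1/4)*(1 + t/2)^4 := Rbar_eq_of_le b (by linarith)
  have hRd : Rbar d = (1/4)*(1 + d/2)^4 := by
    rw [Rbar_eq_of_le d (by rw [abs_of_pos hd0]; linarith),
      abs_of_pos hd0]
  rw [Kfun, Kfun, hRb, hRd, hbsq]
  rw [div_le_div_iff₀ (by positivity) (by positivity)]
  have core := core_ineq d t ht0 htd hd
  have hmul := mul_le_mul_of_nonneg_left core
    (show (0:ℝ) ≤ (1 + d^2)/256 by positivity)
  nlinarith [hmul]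

lemma Kfun_nonneg (h b : ℝ) (h0 : 0 ≤ h) (h1 : h ≤ 1) : 0 ≤ Kfun h b := by
  have hR : 0 < Rbar b := by
    unfold Rbar
    split_ifs with hb
    · positivity
    · push_neg at hb
      have : (0:ℝ) < |b| := by linarith
      have := sq_abs b
      nlinarith
  have : 0 ≤ (h + b^2) * (1 - h) := by
    apply mul_nonneg <;> nlinarith [sq_nonneg b]
  exact div_nonneg this hR.le

/-- For `0 < d ≤ 1/2`, the maximizer over `h ∈ [0,1/2]` of
`inf_{b ∈ [-d,d]} K(h,b)` is `h* = (1-d²)/2`, and the inner infimum at `h*` is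
attained at `b = ±d`. -/
theorem maximin_quadratic_small_d (d : ℝ) (hd0 : 0 < d) (hd : d ≤ 1/2) :
    ((1 - d^2)/2 ∈ Set.Icc (0:ℝ) (1/2)) ∧
    (∀ h ∈ Set.Icc (0:ℝ) (1/2),
      sInf ((fun b => Kfun h b) '' Set.Icc (-d) d) ≤
        sInf ((fun b => Kfun ((1 - d^2)/2) b) '' Set.Icc (-d) d)) ∧
    IsLeast ((fun b => Kfun ((1 - d^2)/2) b) '' Set.Icc (-d) d)
      (Kfun ((1 - d^2)/2) d) ∧
    Kfun ((1 - d^2)/2) (-d) = Kfun ((1 - d^2)/2) d := by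
  have hstar : (1 - d^2)/2 ∈ Set.Icc (0:ℝ) (1/2) := by
    constructor <;> nlinarith [sq_nonneg d]
  have hdmem : d ∈ Set.Icc (-d) d := ⟨by linarith, le_refl d⟩
  have hleast : IsLeast ((fun b => Kfun ((1 - d^2)/2) b) '' Set.Icc (-d) d)
      (Kfun ((1 - d^2)/2) d) := by
    constructor
    · exact ⟨d, hdmem, rfl⟩
    · rintro x ⟨b, hb, rfl⟩
      exact Kfun_mono d b hd0 hd (abs_le.2 hb)
  refine ⟨hstar, ?_, hleast, ?_⟩
  · intro h hh
    have hbdd : BddBelow ((fun b => Kfun h b) '' Set.Icc (-d) d) := by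
      refine ⟨0, ?_⟩
      rintro x ⟨b, hb, rfl⟩
      exact Kfun_nonneg h b hh.1 (by linarith [hh.2])
    have h1 : sInf ((fun b => Kfun h b) '' Set.Icc (-d) d) ≤ Kfun h d :=
      csInf_le hbdd ⟨d, hdmem, rfl⟩
    have h2 : Kfun h d ≤ Kfun ((1 - d^2)/2) d := by
      have hR : Rbar d = (1/4)*(1 + d/2)^4 := by
        rw [Rbar_eq_of_le d (by rw [abs_of_pos hd0]; linarith), abs_of_pos hd0]
      rw [Kfun, Kfun, hR, div_le_div_iff₀ (by positivity) (by positivity)]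
      have hsq : 0 ≤ (h - (1 - d^2)/2)^2 := sq_nonneg _
      nlinarith [sq_nonneg (h - (1 - d^2)/2), pow_pos (show (0:ℝ) < 1 + d/2 by linarith) 4]
    rw [hleast.csInf_eq]
    linarith
  · simp [Kfun, Rbar, abs_neg, neg_sq]
end

section
/- For the constant versus quadratic model on [-1,1], the design ξ* with masses 5/16, 3/8, 5/16 at the points -1, 0, 1 satisfies eff_T(ξ*, b) := T(ξ*, (b,1))/R̄(b) ≥ 1/2 for every b ∈ R, where T(ξ*, (b,1)) = inf_c Σ ξ*({x})(b x + x^2 - c)^2 and R̄(b) = (1/4)(1+|b|/2)^4 for |b| ≤ 2 and b^2 for |b| ≥ 2. -/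
/-- `T(ξ*, (b,1))` for the design with masses `5/16, 3/8, 5/16` at `-1, 0, 1`:
the minimal `ξ*`-weighted mean squared deviation of `x² + bx` from constants. -/
noncomputable def Tstar (b : ℝ) : ℝ :=
  sInf (Set.range fun c : ℝ =>
    (5/16) * ((-1:ℝ)^2 + b * (-1) - c)^2
      + (3/8) * ((0:ℝ)^2 + b * 0 - c)^2
      + (5/16) * ((1:ℝ)^2 + b * 1 - c)^2)

lemma Tstar_eq (b : ℝ) : Tstar b = 15/64 + 5*b^2/8 := by
  unfold Tstar
  apply IsLeast.csInf_eq
  constructor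
  · exact ⟨5/8, by ring⟩
  · rintro y ⟨c, rfl⟩
    nlinarith [sq_nonneg (c - 5/8)]

/-- The design with masses `5/16, 3/8, 5/16` at `-1, 0, 1` has
T-efficiency at least `1/2` for every `b ∈ ℝ`. -/
theorem efficiency_bound_three_point (b : ℝ) :
    1/2 ≤ Tstar b / Rbar b := by
  rw [Tstar_eq, Rbar]
  rcases le_or_gt |b| 2 with h | h
  · rw [if_pos h]
    have h0 : (0:ℝ) ≤ |b| := abs_nonneg b
    have hb2 : b^2 = |b|^2 := (sq_abs b).symm
    have hpos : (0:ℝ) < (1/4)*(1 + |b|/2)^4 := by positivity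
    rw [le_div_iff₀ hpos]
    nlinarith [hb2, mul_nonneg (sub_nonneg.2 h) (sq_nonneg (abs b)),
      mul_nonneg (mul_nonneg (sub_nonneg.2 h) h0) (sq_nonneg (abs b)),
      sq_nonneg (6*(abs b) - 8/3)]
  · rw [if_neg (not_le.mpr h)]
    have hb2 : (2:ℝ) < |b| := h
    have hpos : (0:ℝ) < b^2 := by
      have : b ≠ 0 := by intro h0; simp [h0] at hb2; linarith
      positivity
    rw [le_div_iff₀ hpos]
    nlinarith
end

section
/- Let π̄ be a probability distribution on B ⊂ R^{s-1} such that L = ∫_B ((b b^T, b),(b^T, 1)) dπ̄(b) exists. A design ξ* maximizes the Bayesian T-criterion V_B(ξ) = ∫_B inf_{q} ∫_X (Σ q_i f_i(x) - (b_1 f_{m-s+1}(x)+⋯+b_{s-1} f_{m-1}(x)+f_m(x)))^2 dξ(x) dπ̄(b) over designs admitting a solution of M11(ξ)X = M12(ξ) if and only if ξ* maximizes the linear criterion tr(L M_(s)(ξ)) over the same class. -/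
open Matrix MeasureTheory

/-- An approximate design: a finitely supported probability measure on the
design space `D`, given by support points and weights. -/
structure Design (k : ℕ) (D : Set (Fin k → ℝ)) where
  n : ℕ
  pts : Fin n → (Fin k → ℝ)
  w : Fin n → ℝ
  mem : ∀ i, pts i ∈ D
  nonneg : ∀ i, 0 ≤ w i
  sum_one : ∑ i, w i = 1

variable {k p t : ℕ} {D : Set (Fin k → ℝ)}

/-- Block `M11(ξ)` of the information matrix. -/
noncomputable def M11 (f1 : Fin p → (Fin k → ℝ) → ℝ) (ξ : Design k D) :
    Matrix (Fin p) (Fin p) ℝ :=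
  Matrix.of fun i j => ∑ n, ξ.w n * f1 i (ξ.pts n) * f1 j (ξ.pts n)

/-- Block `M12(ξ)` of the information matrix. -/
noncomputable def M12 (f1 : Fin p → (Fin k → ℝ) → ℝ)
    (f2 : Fin (t+1) → (Fin k → ℝ) → ℝ) (ξ : Design k D) :
    Matrix (Fin p) (Fin (t+1)) ℝ :=
  Matrix.of fun i j => ∑ n, ξ.w n * f1 i (ξ.pts n) * f2 j (ξ.pts n)

/-- Block `M22(ξ)` of the information matrix. -/
noncomputable def M22 (f2 : Fin (t+1) → (Fin k → ℝ) → ℝ) (ξ : Design k D) :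
    Matrix (Fin (t+1)) (Fin (t+1)) ℝ :=
  Matrix.of fun i j => ∑ n, ξ.w n * f2 i (ξ.pts n) * f2 j (ξ.pts n)

/-- The Bayesian T-optimality criterion
`V_B(ξ) = ∫_B inf_q ∫ (Σ qᵢ fᵢ - (b₁ f_{m-s+1} + ⋯ + b_{s-1} f_{m-1} + f_m))² dξ dπ̄(b)`. -/
noncomputable def VB (f1 : Fin p → (Fin k → ℝ) → ℝ)
    (f2 : Fin (t+1) → (Fin k → ℝ) → ℝ) (π : Measure (Fin t → ℝ))
    (ξ : Design k D) : ℝ :=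
  ∫ b, sInf {v : ℝ | ∃ q : Fin p → ℝ,
    v = ∑ n, ξ.w n * ((∑ i, q i * f1 i (ξ.pts n)) -
      (∑ j : Fin (t+1), (Fin.snoc b (1:ℝ) : Fin (t+1) → ℝ) j * f2 j (ξ.pts n)))^2} ∂π

/- ------------------ auxiliary lemmas ------------------ -/

lemma dot_sum_matrix {a b N : ℕ} (u : Fin a → ℝ) (v : Fin b → ℝ)
    (w : Fin N → ℝ) (g : Fin a → Fin N → ℝ) (h : Fin b → Fin N → ℝ) :
    u ⬝ᵥ ((Matrix.of fun i j => ∑ n, w n * g i n * h j n) *ᵥ v)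
      = ∑ n, w n * (∑ i, u i * g i n) * (∑ j, v j * h j n) := by
  simp only [dotProduct, mulVec, Matrix.of_apply]
  calc ∑ i, u i * (∑ j, (∑ n, w n * g i n * h j n) * v j)
      = ∑ i, ∑ j, ∑ n, u i * (w n * g i n * h j n * v j) := by
        refine Finset.sum_congr rfl fun i _ => ?_
        rw [Finset.mul_sum]
        refine Finset.sum_congr rfl fun j _ => ?_
        rw [Finset.sum_mul, Finset.mul_sum]
    _ = ∑ i, ∑ n, ∑ j, u i * (w n * g i n * h j n * v j) :=
        Finset.sum_congr rfl fun i _ => Finset.sum_comm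
    _ = ∑ n, ∑ i, ∑ j, u i * (w n * g i n * h j n * v j) := Finset.sum_comm
    _ = ∑ n, w n * (∑ i, u i * g i n) * (∑ j, v j * h j n) := by
        refine Finset.sum_congr rfl fun n _ => ?_
        rw [mul_assoc, Finset.sum_mul_sum, Finset.mul_sum]
        refine Finset.sum_congr rfl fun i _ => ?_
        rw [Finset.mul_sum]
        exact Finset.sum_congr rfl fun j _ => by ring

section Main

variable (f1 : Fin p → (Fin k → ℝ) → ℝ) (f2 : Fin (t+1) → (Fin k → ℝ) → ℝ)
  (ξ : Design k D)

lemma dot_M11 (u v : Fin p → ℝ) :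
    u ⬝ᵥ (M11 f1 ξ *ᵥ v)
      = ∑ n, ξ.w n * (∑ i, u i * f1 i (ξ.pts n)) * (∑ j, v j * f1 j (ξ.pts n)) :=
  dot_sum_matrix u v ξ.w (fun i n => f1 i (ξ.pts n)) (fun j n => f1 j (ξ.pts n))

lemma dot_M12 (u : Fin p → ℝ) (v : Fin (t+1) → ℝ) :
    u ⬝ᵥ (M12 f1 f2 ξ *ᵥ v)
      = ∑ n, ξ.w n * (∑ i, u i * f1 i (ξ.pts n)) * (∑ j, v j * f2 j (ξ.pts n)) :=
  dot_sum_matrix u v ξ.w (fun i n => f1 i (ξ.pts n)) (fun j n => f2 j (ξ.pts n))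

lemma dot_M22 (u v : Fin (t+1) → ℝ) :
    u ⬝ᵥ (M22 f2 ξ *ᵥ v)
      = ∑ n, ξ.w n * (∑ i, u i * f2 i (ξ.pts n)) * (∑ j, v j * f2 j (ξ.pts n)) :=
  dot_sum_matrix u v ξ.w (fun i n => f2 i (ξ.pts n)) (fun j n => f2 j (ξ.pts n))

/-- The objective, as a function of `q`. -/
noncomputable def gval (c : Fin (t+1) → ℝ) (q : Fin p → ℝ) : ℝ :=
  ∑ n, ξ.w n * ((∑ i, q i * f1 i (ξ.pts n)) -
      (∑ j : Fin (t+1), c j * f2 j (ξ.pts n)))^2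

variable {f1 f2 ξ}

lemma gval_value {X : Matrix (Fin p) (Fin (t+1)) ℝ}
    (hX : M11 f1 ξ * X = M12 f1 f2 ξ) (c : Fin (t+1) → ℝ) :
    gval f1 f2 ξ c (X *ᵥ c)
      = c ⬝ᵥ ((M22 f2 ξ - Xᵀ * M11 f1 ξ * X) *ᵥ c) := by
  have hM : M11 f1 ξ *ᵥ (X *ᵥ c) = M12 f1 f2 ξ *ᵥ c := by
    rw [mulVec_mulVec, hX]
  have hS : c ⬝ᵥ ((M22 f2 ξ - Xᵀ * M11 f1 ξ * X) *ᵥ c)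
      = c ⬝ᵥ (M22 f2 ξ *ᵥ c) - (X *ᵥ c) ⬝ᵥ (M11 f1 ξ *ᵥ (X *ᵥ c)) := by
    rw [sub_mulVec, dotProduct_sub]
    congr 1
    rw [← mulVec_mulVec, ← mulVec_mulVec, dotProduct_mulVec, vecMul_transpose]
  rw [hS]
  have h11 := dot_M11 f1 ξ (X *ᵥ c) (X *ᵥ c)
  have h12 := dot_M12 f1 f2 ξ (X *ᵥ c) c
  have h22 := dot_M22 f2 ξ c c
  have h1112 : (X *ᵥ c) ⬝ᵥ (M11 f1 ξ *ᵥ (X *ᵥ c)) = (X *ᵥ c) ⬝ᵥ (M12 f1 f2 ξ *ᵥ c) := by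
    rw [hM]
  calc gval f1 f2 ξ c (X *ᵥ c)
      = ∑ n, (ξ.w n * (∑ i, c i * f2 i (ξ.pts n)) * (∑ j, c j * f2 j (ξ.pts n))
          - (2 * (ξ.w n * (∑ i, (X *ᵥ c) i * f1 i (ξ.pts n)) * (∑ j, c j * f2 j (ξ.pts n)))
          - ξ.w n * (∑ i, (X *ᵥ c) i * f1 i (ξ.pts n)) * (∑ j, (X *ᵥ c) j * f1 j (ξ.pts n)))) := by
        refine Finset.sum_congr rfl fun n _ => by ring
    _ = (∑ n, ξ.w n * (∑ i, c i * f2 i (ξ.pts n)) * (∑ j, c j * f2 j (ξ.pts n)))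
        - ((∑ n, 2 * (ξ.w n * (∑ i, (X *ᵥ c) i * f1 i (ξ.pts n)) * (∑ j, c j * f2 j (ξ.pts n))))
        - ∑ n, ξ.w n * (∑ i, (X *ᵥ c) i * f1 i (ξ.pts n)) * (∑ j, (X *ᵥ c) j * f1 j (ξ.pts n))) := by
        rw [Finset.sum_sub_distrib, Finset.sum_sub_distrib]
    _ = c ⬝ᵥ (M22 f2 ξ *ᵥ c) - (X *ᵥ c) ⬝ᵥ (M11 f1 ξ *ᵥ (X *ᵥ c)) := by
        rw [← Finset.mul_sum, ← h11, ← h12, ← h22, h1112]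
        ring

lemma gval_lower {X : Matrix (Fin p) (Fin (t+1)) ℝ}
    (hX : M11 f1 ξ * X = M12 f1 f2 ξ) (c : Fin (t+1) → ℝ) (q : Fin p → ℝ) :
    gval f1 f2 ξ c (X *ᵥ c) ≤ gval f1 f2 ξ c q := by
  have hM : M11 f1 ξ *ᵥ (X *ᵥ c) = M12 f1 f2 ξ *ᵥ c := by
    rw [mulVec_mulVec, hX]
  set u : Fin p → ℝ := fun i => q i - (X *ᵥ c) i with hu
  have hE : ∀ n, (∑ i, q i * f1 i (ξ.pts n)) - (∑ i, (X *ᵥ c) i * f1 i (ξ.pts n))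
      = ∑ i, u i * f1 i (ξ.pts n) := by
    intro n
    rw [← Finset.sum_sub_distrib]
    exact Finset.sum_congr rfl fun i _ => by rw [hu]; ring
  have hcross : ∑ n, ξ.w n * (∑ i, u i * f1 i (ξ.pts n)) *
      ((∑ j, (X *ᵥ c) j * f1 j (ξ.pts n)) - (∑ j, c j * f2 j (ξ.pts n))) = 0 := by
    have e1 := dot_M11 f1 ξ u (X *ᵥ c)
    have e2 := dot_M12 f1 f2 ξ u c
    calc ∑ n, ξ.w n * (∑ i, u i * f1 i (ξ.pts n)) *
          ((∑ j, (X *ᵥ c) j * f1 j (ξ.pts n)) - (∑ j, c j * f2 j (ξ.pts n)))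
        = (∑ n, ξ.w n * (∑ i, u i * f1 i (ξ.pts n)) * (∑ j, (X *ᵥ c) j * f1 j (ξ.pts n)))
          - ∑ n, ξ.w n * (∑ i, u i * f1 i (ξ.pts n)) * (∑ j, c j * f2 j (ξ.pts n)) := by
          rw [← Finset.sum_sub_distrib]
          exact Finset.sum_congr rfl fun n _ => by ring
      _ = u ⬝ᵥ (M11 f1 ξ *ᵥ (X *ᵥ c)) - u ⬝ᵥ (M12 f1 f2 ξ *ᵥ c) := by rw [e1, e2]
      _ = 0 := by rw [hM, sub_self]
  have expand : gval f1 f2 ξ c q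
      = gval f1 f2 ξ c (X *ᵥ c)
        + 2 * (∑ n, ξ.w n * (∑ i, u i * f1 i (ξ.pts n)) *
            ((∑ j, (X *ᵥ c) j * f1 j (ξ.pts n)) - (∑ j, c j * f2 j (ξ.pts n))))
        + ∑ n, ξ.w n * (∑ i, u i * f1 i (ξ.pts n))^2 := by
    unfold gval
    rw [Finset.mul_sum, ← Finset.sum_add_distrib, ← Finset.sum_add_distrib]
    refine Finset.sum_congr rfl fun n _ => ?_
    rw [← hE n]
    ring
  have hnn : 0 ≤ ∑ n, ξ.w n * (∑ i, u i * f1 i (ξ.pts n))^2 :=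
    Finset.sum_nonneg fun n _ => mul_nonneg (ξ.nonneg n) (sq_nonneg _)
  rw [expand, hcross]
  linarith

lemma sInf_gval {X : Matrix (Fin p) (Fin (t+1)) ℝ}
    (hX : M11 f1 ξ * X = M12 f1 f2 ξ) (c : Fin (t+1) → ℝ) :
    sInf {v : ℝ | ∃ q : Fin p → ℝ, v = gval f1 f2 ξ c q}
      = c ⬝ᵥ ((M22 f2 ξ - Xᵀ * M11 f1 ξ * X) *ᵥ c) := by
  have hmem : c ⬝ᵥ ((M22 f2 ξ - Xᵀ * M11 f1 ξ * X) *ᵥ c)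
      ∈ {v : ℝ | ∃ q : Fin p → ℝ, v = gval f1 f2 ξ c q} :=
    ⟨X *ᵥ c, (gval_value hX c).symm⟩
  have hlb : ∀ v ∈ {v : ℝ | ∃ q : Fin p → ℝ, v = gval f1 f2 ξ c q},
      c ⬝ᵥ ((M22 f2 ξ - Xᵀ * M11 f1 ξ * X) *ᵥ c) ≤ v := by
    rintro v ⟨q, rfl⟩
    rw [← gval_value hX c]
    exact gval_lower hX c q
  exact le_antisymm (csInf_le ⟨_, hlb⟩ hmem) (le_csInf ⟨_, hmem⟩ hlb)

lemma VB_eq (π : Measure (Fin t → ℝ)) [IsProbabilityMeasure π]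
    (hInt : ∀ i j : Fin (t+1),
      Integrable (fun b => (Fin.snoc b (1:ℝ) : Fin (t+1) → ℝ) i * (Fin.snoc b (1:ℝ) : Fin (t+1) → ℝ) j) π)
    (L : Matrix (Fin (t+1)) (Fin (t+1)) ℝ)
    (hL : L = Matrix.of fun i j => ∫ b, (Fin.snoc b (1:ℝ) : Fin (t+1) → ℝ) i * (Fin.snoc b (1:ℝ) : Fin (t+1) → ℝ) j ∂π)
    {X : Matrix (Fin p) (Fin (t+1)) ℝ}
    (hX : M11 f1 ξ * X = M12 f1 f2 ξ) :
    VB f1 f2 π ξ = (L * (M22 f2 ξ - Xᵀ * M11 f1 ξ * X)).trace := by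
  set S := M22 f2 ξ - Xᵀ * M11 f1 ξ * X with hSdef
  have step1 : VB f1 f2 π ξ
      = ∫ b, (Fin.snoc b (1:ℝ) : Fin (t+1) → ℝ) ⬝ᵥ (S *ᵥ (Fin.snoc b (1:ℝ))) ∂π := by
    unfold VB
    refine integral_congr_ae (Filter.Eventually.of_forall fun b => ?_)
    exact sInf_gval hX (Fin.snoc b (1:ℝ))
  have step2 : ∀ b : Fin t → ℝ,
      (Fin.snoc b (1:ℝ) : Fin (t+1) → ℝ) ⬝ᵥ (S *ᵥ (Fin.snoc b (1:ℝ)))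
        = ∑ i, ∑ j, ((Fin.snoc b (1:ℝ) : Fin (t+1) → ℝ) i * (Fin.snoc b (1:ℝ) : Fin (t+1) → ℝ) j) * S i j := by
    intro b
    simp only [dotProduct, mulVec]
    refine Finset.sum_congr rfl fun i _ => ?_
    rw [Finset.mul_sum]
    exact Finset.sum_congr rfl fun j _ => by ring
  have step3 : VB f1 f2 π ξ
      = ∑ i, ∑ j, (∫ b, (Fin.snoc b (1:ℝ) : Fin (t+1) → ℝ) i * (Fin.snoc b (1:ℝ) : Fin (t+1) → ℝ) j ∂π) * S i j := by
    rw [step1]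
    rw [integral_congr_ae (Filter.Eventually.of_forall step2)]
    rw [integral_finset_sum _ (fun i _ => integrable_finset_sum _ (fun j _ => (hInt i j).mul_const (S i j)))]
    refine Finset.sum_congr rfl fun i _ => ?_
    rw [integral_finset_sum _ (fun j _ => (hInt i j).mul_const (S i j))]
    exact Finset.sum_congr rfl fun j _ => integral_mul_const _ _
  rw [step3, hL]
  simp only [Matrix.trace, Matrix.diag_apply, Matrix.mul_apply, Matrix.of_apply]
  rw [Finset.sum_comm]
  refine Finset.sum_congr rfl fun i _ => Finset.sum_congr rfl fun j _ => ?_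
  congr 1
  exact integral_congr_ae (Filter.Eventually.of_forall fun b => mul_comm _ _)

end Main

/-- A design `ξ*` maximizes the Bayesian T-criterion `V_B` over
the class of designs admitting a solution of `M11(ξ)X = M12(ξ)` if and only if
it maximizes the linear criterion `tr(L M_(s)(ξ))` over the same class, where
`L = ∫ (b,1)(b,1)ᵀ dπ̄(b)`. -/
theorem bayesian_T_optimal_iff_linear_criterion
    (hD : IsCompact D)
    (f1 : Fin p → (Fin k → ℝ) → ℝ) (f2 : Fin (t+1) → (Fin k → ℝ) → ℝ)
    (hf1 : ∀ i, ContinuousOn (f1 i) D) (hf2 : ∀ i, ContinuousOn (f2 i) D)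
    (π : Measure (Fin t → ℝ)) [IsProbabilityMeasure π]
    (hInt : ∀ i j : Fin (t+1),
      Integrable (fun b => (Fin.snoc b (1:ℝ) : Fin (t+1) → ℝ) i * (Fin.snoc b (1:ℝ) : Fin (t+1) → ℝ) j) π)
    (L : Matrix (Fin (t+1)) (Fin (t+1)) ℝ)
    (hL : L = Matrix.of fun i j => ∫ b, (Fin.snoc b (1:ℝ) : Fin (t+1) → ℝ) i * (Fin.snoc b (1:ℝ) : Fin (t+1) → ℝ) j ∂π)
    (ξstar : Design k D) (Xstar : Matrix (Fin p) (Fin (t+1)) ℝ)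
    (hXstar : M11 f1 ξstar * Xstar = M12 f1 f2 ξstar) :
    (∀ ξ : Design k D, (∃ X, M11 f1 ξ * X = M12 f1 f2 ξ) →
        VB f1 f2 π ξ ≤ VB f1 f2 π ξstar) ↔
    (∀ ξ : Design k D, ∀ X : Matrix (Fin p) (Fin (t+1)) ℝ,
        M11 f1 ξ * X = M12 f1 f2 ξ →
        (L * (M22 f2 ξ - Xᵀ * M11 f1 ξ * X)).trace ≤
          (L * (M22 f2 ξstar - Xstarᵀ * M11 f1 ξstar * Xstar)).trace) := by
  constructor
  · intro h ξ X hXs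
    rw [← VB_eq π hInt L hL hXs, ← VB_eq π hInt L hL hXstar]
    exact h ξ ⟨X, hXs⟩
  · rintro h ξ ⟨X, hXs⟩
    rw [VB_eq π hInt L hL hXs, VB_eq π hInt L hL hXstar]
    exact h ξ X hXs
end

section
/- With R̄(b) as in the quadratic case and f(b) proportional to 1/R̄(b) on [-a,a] with normalizing constant 3(2+a)^3/(16 a (12 + 6a + a^2)) when a ≤ 2, one has ∫_{-a}^{a} b^2 f(b) db = 4a^2/(12 + 6a + a^2) for 0 < a ≤ 2. -/
open MeasureTheory intervalIntegral Set

lemma Rbar_of_abs_le {b : ℝ} (hb : |b| ≤ 2) : Rbar b = (2 + |b|) ^ 4 / 64 := by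
  rw [Rbar, if_pos hb]
  ring

theorem intervalIntegral.integral_neg_self_eq_two_nsmul_of_even {E : Type*}
    [NormedAddCommGroup E] [NormedSpace ℝ E] {f : ℝ → E} (hf : ∀ x, f (-x) = f x) {a : ℝ}
    (hint : IntervalIntegrable f volume (-a) a) :
    ∫ x in -a..a, f x = 2 • ∫ x in 0..a, f x := by
  have h0 : (0 : ℝ) ∈ uIcc (-a) a := by
    rcases le_total 0 a with h | h <;> simp [h]
  rw [← integral_add_adjacent_intervals (hint.mono_set (uIcc_subset_uIcc_left h0))
    (hint.mono_set (uIcc_subset_uIcc_right h0))]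
  have hneg : ∫ x in -a..0, f x = ∫ x in 0..a, f x := by
    simpa [hf] using (integral_comp_neg (a := 0) (b := a) f).symm
  rw [hneg, two_nsmul]

lemma hasDerivAt_pow_three_div_add_pow_three {c x : ℝ} (hx : c + x ≠ 0) :
    HasDerivAt (fun y => y ^ 3 / (c + y) ^ 3) (3 * c * x ^ 2 / (c + x) ^ 4) x := by
  refine ((hasDerivAt_pow 3 x).fun_div (((hasDerivAt_id' x).const_add c).fun_pow 3)
    (pow_ne_zero 3 hx)).congr_deriv ?_
  field_simp
  ring

lemma integral_sq_div_add_pow_four {c a : ℝ} (hc : 0 < c) (ha : 0 ≤ a) :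
    ∫ x in 0..a, x ^ 2 / (c + x) ^ 4 = a ^ 3 / (3 * c * (c + a) ^ 3) := by
  have hpos : ∀ x ∈ uIcc 0 a, 0 < c + x := fun x hx => by
    rw [uIcc_of_le ha] at hx
    linarith [hx.1]
  have hderiv : ∀ x ∈ uIcc 0 a,
      HasDerivAt (fun y => y ^ 3 / (c + y) ^ 3 / (3 * c)) (x ^ 2 / (c + x) ^ 4) x := fun x hx => by
    refine ((hasDerivAt_pow_three_div_add_pow_three (hpos x hx).ne').div_const (3 * c)).congr_deriv ?_
    field_simp
  have hcont : ContinuousOn (fun x : ℝ => x ^ 2 / (c + x) ^ 4) (uIcc 0 a) :=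
    ContinuousOn.div (by fun_prop) (by fun_prop) fun x hx => (pow_pos (hpos x hx) 4).ne'
  rw [integral_eq_sub_of_hasDerivAt hderiv hcont.intervalIntegrable]
  field_simp
  ring

lemma integral_sq_div_add_abs_pow_four {c a : ℝ} (hc : 0 < c) (ha : 0 ≤ a) :
    ∫ x in -a..a, x ^ 2 / (c + |x|) ^ 4 = 2 * a ^ 3 / (3 * c * (c + a) ^ 3) := by
  have hcont : Continuous fun x : ℝ => x ^ 2 / (c + |x|) ^ 4 :=
    Continuous.div (by fun_prop) (by fun_prop) fun x => by positivity
  rw [integral_neg_self_eq_two_nsmul_of_even (fun x => by simp) (hcont.intervalIntegrable _ _),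
    integral_congr (g := fun x => x ^ 2 / (c + x) ^ 4) fun x hx => by
      rw [uIcc_of_le ha] at hx
      simp [abs_of_nonneg hx.1],
    integral_sq_div_add_pow_four hc ha, nsmul_eq_mul]
  ring

/-- For `0 < a ≤ 2` and the density
`f(b) = [3(2+a)³/(16a(12+6a+a²))] / R̄(b)` on `[-a,a]`, the second moment is
`∫_{-a}^{a} b² f(b) db = 4a²/(12+6a+a²)`. -/
theorem second_moment_density_small_a (a : ℝ) (ha0 : 0 < a) (ha : a ≤ 2) :
    (∫ b in (-a)..a,
        b^2 * (3*(2+a)^3 / (16*a*(12 + 6*a + a^2)) / Rbar b)) =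
      4*a^2 / (12 + 6*a + a^2) := by
  set K := 3*(2+a)^3 / (16*a*(12 + 6*a + a^2))
  have hdensity : EqOn (fun b => b^2 * (K / Rbar b)) (fun b => 64 * K * (b^2 / (2 + |b|)^4))
      (uIcc (-a) a) := fun b hb => by
    dsimp only
    rw [uIcc_of_le (by linarith)] at hb
    rw [Rbar_of_abs_le (abs_le.2 ⟨by linarith [hb.1], hb.2.trans ha⟩)]
    field_simp
  rw [integral_congr hdensity, intervalIntegral.integral_const_mul,
    integral_sq_div_add_abs_pow_four two_pos ha0.le]
  simp only [K]
  field_simp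
  ring
end
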